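/- arXiv:2306.11651 — 2 statements merged into one kernel-verified Lean document; each statement's English description precedes it below -/
import Mathlib

section
/- Consider the semi-discrete entropy conservative scheme m_c dτ_c/dt = Σ_{p∈P(c)} L_{pc}·(v_p − v_c), m_c dv_c/dt = −Σ_{p∈P(c)} [ L_{pc}(p_p − p_c) + ‖L_{pc}‖α_p(v_c − v_p) ], m_c dS_c/dt = 0, with nodal values v_p, p_p given by norm-weighted averages over C(p) and α_p chosen so that for every node p: Σ_{c∈C(p)} [ L_{pc}·( p_c(v_c − v_p) + v_c(p_c − p_p) ) − ‖L_{pc}‖ α_p v_c·(v_c − v_p) ] = 0. If the cell total energy satisfies the chain rule m_c dE_c/dt = m_c( −p_c dτ_c/dt + v_c·dv_c/dt + θ_c dS_c/dt ), then the total energy Σ_c m_c E_c is conserved: d/dt Σ_c m_c E_c = 0. -/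
/-!
The Gibbs relation turns `m_c dE_c/dt` into `-p_c (m_c dτ_c/dt) + ⟪v_c, m_c dv_c/dt⟫`, the entropy
term vanishing since `m_c dS_c/dt = 0`. Inserting the scheme writes this as a sum over the vertices
of `c` of a corner flux. Exchanging the sums over the cell–vertex incidence, the total energy rate
is a sum over nodes of the corner fluxes around each node, and `α_p` was chosen exactly so that
each such nodal sum vanishes.
-/

open scoped RealInnerProductSpace

open Finset

section CornerFlux

variable {F : Type*} [NormedAddCommGroup F] [InnerProductSpace ℝ F]

/-- The energy flux through the corner `(c, p)`, from the cell values `v_c, p_c`, the nodal values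
`v_p, p_p, α_p` and the corner normal `L_{pc}`. -/
noncomputable def cornerEnergyFlux (L v vp : F) (pc pp α : ℝ) : ℝ :=
  ⟪L, pc • (v - vp) + (pc - pp) • v⟫ - ‖L‖ * α * ⟪v, v - vp⟫

theorem neg_mul_inner_add_inner_eq_cornerEnergyFlux (L v vp : F) (pc pp α : ℝ) :
    -pc * ⟪L, vp - v⟫ + ⟪v, -((pp - pc) • L + (‖L‖ * α) • (v - vp))⟫ =
      cornerEnergyFlux L v vp pc pp α := by
  simp only [cornerEnergyFlux, inner_add_right, inner_sub_right, inner_neg_right,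
    inner_smul_right, real_inner_comm v L]
  ring

variable {κ : Type*}

theorem mul_energyRate_eq_sum_cornerEnergyFlux (P : Finset κ) (L vp : κ → F) (pp α : κ → ℝ)
    (v v' : F) (m pc θ τ' S' E' : ℝ)
    (hτ : m * τ' = ∑ p ∈ P, ⟪L p, vp p - v⟫)
    (hv : m • v' = -∑ p ∈ P, ((pp p - pc) • L p + (‖L p‖ * α p) • (v - vp p)))
    (hS : m * S' = 0)
    (hGibbs : m * E' = m * (-pc * τ' + ⟪v, v'⟫ + θ * S')) :
    m * E' = ∑ p ∈ P, cornerEnergyFlux (L p) v (vp p) pc (pp p) (α p) := by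
  have hrate : m * E' = -pc * (m * τ') + ⟪v, m • v'⟫ + θ * (m * S') := by
    rw [hGibbs, real_inner_smul_right]
    ring
  rw [hrate, hS, hτ, hv, mul_zero, add_zero, mul_sum, ← sum_neg_distrib, inner_sum,
    ← sum_add_distrib]
  exact sum_congr rfl fun p _ => neg_mul_inner_add_inner_eq_cornerEnergyFlux _ _ _ _ _ _

end CornerFlux

theorem stmt_8_general (d : ℕ) (ι κ : Type*) [Fintype ι] [Fintype κ]
    (Pc : ι → Finset κ) (Cp : κ → Finset ι)
    (hinc : ∀ c p, c ∈ Cp p ↔ p ∈ Pc c)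
    (m : ι → ℝ)
    (L : ι → κ → EuclideanSpace ℝ (Fin d))
    (v : ι → EuclideanSpace ℝ (Fin d)) (pc θ : ι → ℝ)
    (vp : κ → EuclideanSpace ℝ (Fin d)) (pp α : κ → ℝ)
    -- semi-discrete scheme (time derivatives at the current instant)
    (τ' S' E' : ι → ℝ) (v' : ι → EuclideanSpace ℝ (Fin d))
    (hτ : ∀ c, m c * τ' c = ∑ p ∈ Pc c, ⟪L c p, vp p - v c⟫)
    (hv : ∀ c, m c • v' c =
      -∑ p ∈ Pc c, ((pp p - pc c) • L c p + (‖L c p‖ * α p) • (v c - vp p)))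
    (hS : ∀ c, m c * S' c = 0)
    -- thermodynamic compatibility condition defining α at each node
    (hα : ∀ p, ∑ c ∈ Cp p,
      (⟪L c p, pc c • (v c - vp p) + (pc c - pp p) • v c⟫
        - ‖L c p‖ * α p * ⟪v c, v c - vp p⟫) = 0)
    -- Gibbs chain rule for the cell total energy
    (hGibbs : ∀ c, m c * E' c =
      m c * (-(pc c) * τ' c + ⟪v c, v' c⟫ + θ c * S' c)) :
    ∑ c, m c * E' c = 0 := by
  calc ∑ c, m c * E' c
      = ∑ c, ∑ p ∈ Pc c, cornerEnergyFlux (L c p) (v c) (vp p) (pc c) (pp p) (α p) :=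
        sum_congr rfl fun c _ => mul_energyRate_eq_sum_cornerEnergyFlux (Pc c) (L c) vp pp α
          (v c) (v' c) (m c) (pc c) (θ c) (τ' c) (S' c) (E' c) (hτ c) (hv c) (hS c) (hGibbs c)
    _ = ∑ p, ∑ c ∈ Cp p, cornerEnergyFlux (L c p) (v c) (vp p) (pc c) (pp p) (α p) :=
        sum_comm' fun c p => by simp [hinc]
    _ = 0 := sum_eq_zero fun p _ => hα p

/-- Nonlinear stability in the energy norm of the semi-discrete entropy
conservative Lagrangian scheme: total energy `Σ_c m_c E_c` is conserved. -/
theorem stmt_8 (d : ℕ) (ι κ : Type*) [Fintype ι] [Fintype κ]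
    (Pc : ι → Finset κ) (Cp : κ → Finset ι)
    (hinc : ∀ c p, c ∈ Cp p ↔ p ∈ Pc c)
    (m : ι → ℝ) (hm : ∀ c, 0 < m c)
    (L : ι → κ → EuclideanSpace ℝ (Fin d))
    (v : ι → EuclideanSpace ℝ (Fin d)) (pc θ : ι → ℝ)
    (vp : κ → EuclideanSpace ℝ (Fin d)) (pp α : κ → ℝ)
    -- nodal values as norm-weighted averages
    (hwpos : ∀ p, 0 < ∑ c ∈ Cp p, ‖L c p‖)
    (hvp : ∀ p, vp p = (∑ c ∈ Cp p, ‖L c p‖)⁻¹ • ∑ c ∈ Cp p, ‖L c p‖ • v c)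
    (hpp : ∀ p, pp p = (∑ c ∈ Cp p, ‖L c p‖ * pc c) / (∑ c ∈ Cp p, ‖L c p‖))
    -- semi-discrete scheme (time derivatives at the current instant)
    (τ' S' E' : ι → ℝ) (v' : ι → EuclideanSpace ℝ (Fin d))
    (hτ : ∀ c, m c * τ' c = ∑ p ∈ Pc c, ⟪L c p, vp p - v c⟫)
    (hv : ∀ c, m c • v' c =
      -∑ p ∈ Pc c, ((pp p - pc c) • L c p + (‖L c p‖ * α p) • (v c - vp p)))
    (hS : ∀ c, m c * S' c = 0)
    -- thermodynamic compatibility condition defining α at each node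
    (hα : ∀ p, ∑ c ∈ Cp p,
      (⟪L c p, pc c • (v c - vp p) + (pc c - pp p) • v c⟫
        - ‖L c p‖ * α p * ⟪v c, v c - vp p⟫) = 0)
    -- Gibbs chain rule for the cell total energy
    (hGibbs : ∀ c, m c * E' c =
      m c * (-(pc c) * τ' c + ⟪v c, v' c⟫ + θ c * S' c)) :
    ∑ c, m c * E' c = 0 :=
  stmt_8_general d ι κ Pc Cp hinc m L v pc θ vp pp α τ' S' E' v' hτ hv hS hα hGibbs
end

section
/- Consider the semi-discrete EUCCLHYD scheme m_c dτ_c/dt = Σ_{p∈P(c)} L_{pc}·(v*_p − v_c), m_c dv_c/dt + Σ_{p∈P(c)} (L_{pc}(p*_{pc} − p_c)) = 0 with L_{pc}p*_{pc} = L_{pc}p_c − M_{pc}(v*_p − v_c), and m_c dS_c/dt = Σ_{p∈P(c)} (1/θ_c)(v_c − v*_p)ᵀM_{pc}(v_c − v*_p). Assume the geometric identity Σ_{p∈P(c)} L_{pc} = 0 holds for every cell c, the Gibbs chain rule m_c dE_c/dt = m_c(−p_c dτ_c/dt + v_c·dv_c/dt + θ_c dS_c/dt), and the nodal equilibrium Σ_{c∈C(p)}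 [ L_{pc}p_c − M_{pc}(v*_p − v_c) ] = 0 for every node p. Then total energy is conserved: Σ_c m_c dE_c/dt = 0. -/
open Matrix

private lemma dot_sum' {d : ℕ} {α : Type*} (u : Fin d → ℝ) (s : Finset α)
    (f : α → Fin d → ℝ) : u ⬝ᵥ (∑ i ∈ s, f i) = ∑ i ∈ s, u ⬝ᵥ f i := by
  simp only [dotProduct, Finset.sum_apply, Finset.mul_sum]
  exact Finset.sum_comm

/-- Nonlinear stability in the energy norm of the semi-discrete EUCCLHYD
scheme: total energy `Σ_c m_c E_c` is conserved. -/
theorem stmt_11 (d : ℕ) (ι κ : Type*) [Fintype ι] [Fintype κ]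
    (Pc : ι → Finset κ) (Cp : κ → Finset ι)
    (hinc : ∀ c p, c ∈ Cp p ↔ p ∈ Pc c)
    (m : ι → ℝ) (hm : ∀ c, 0 < m c)
    (L : ι → κ → Fin d → ℝ)
    (M : ι → κ → Matrix (Fin d) (Fin d) ℝ)
    (hMsym : ∀ c p, (M c p).IsSymm)
    (v : ι → Fin d → ℝ) (pc θ : ι → ℝ) (hθ : ∀ c, 0 < θ c)
    (vstar : κ → Fin d → ℝ)
    -- discrete Gauss theorem
    (hgauss : ∀ c, ∑ p ∈ Pc c, L c p = 0)
    -- nodal equilibrium (sum of sub-cell forces around each node vanishes)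
    (hnode : ∀ p, ∑ c ∈ Cp p, (pc c • L c p - (M c p).mulVec (vstar p - v c)) = 0)
    -- semi-discrete scheme (time derivatives at the current instant)
    (τ' S' E' : ι → ℝ) (v' : ι → Fin d → ℝ)
    (hτ : ∀ c, m c * τ' c = ∑ p ∈ Pc c, L c p ⬝ᵥ (vstar p - v c))
    (hv : ∀ c, m c • v' c +
      ∑ p ∈ Pc c, (-(M c p).mulVec (vstar p - v c)) = 0)
    (hS : ∀ c, m c * S' c =
      ∑ p ∈ Pc c, (1 / θ c) * ((v c - vstar p) ⬝ᵥ (M c p).mulVec (v c - vstar p)))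
    -- Gibbs chain rule for the cell total energy
    (hGibbs : ∀ c, m c * E' c =
      m c * (-(pc c) * τ' c + v c ⬝ᵥ v' c + θ c * S' c)) :
    ∑ c, m c * E' c = 0 := by
  -- Per-cell identity: m_c E'_c = Σ_{p∈P(c)} v*_p ⬝ (M_{pc}(v*_p - v_c) - p_c L_{pc})
  have key : ∀ c, m c * E' c =
      ∑ p ∈ Pc c, vstar p ⬝ᵥ ((M c p).mulVec (vstar p - v c) - pc c • L c p) := by
    intro c
    have hv' : m c • v' c = ∑ p ∈ Pc c, (M c p).mulVec (vstar p - v c) := by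
      have h := hv c
      rw [Finset.sum_neg_distrib, add_neg_eq_zero] at h
      exact h
    have e1 : m c * E' c =
        -(pc c) * (∑ p ∈ Pc c, L c p ⬝ᵥ (vstar p - v c))
        + v c ⬝ᵥ (∑ p ∈ Pc c, (M c p).mulVec (vstar p - v c))
        + θ c * (∑ p ∈ Pc c,
            (1 / θ c) * ((v c - vstar p) ⬝ᵥ (M c p).mulVec (v c - vstar p))) := by
      rw [← hτ c, ← hv', ← hS c, hGibbs c, dotProduct_smul, smul_eq_mul]
      ring
    have e2 : ∀ p ∈ Pc c,
        -(pc c) * (L c p ⬝ᵥ (vstar p - v c))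
        + v c ⬝ᵥ (M c p).mulVec (vstar p - v c)
        + θ c * ((1 / θ c) * ((v c - vstar p) ⬝ᵥ (M c p).mulVec (v c - vstar p)))
        = vstar p ⬝ᵥ ((M c p).mulVec (vstar p - v c) - pc c • L c p)
          + pc c * (v c ⬝ᵥ L c p) := by
      intro p _
      have hθc : θ c ≠ 0 := (hθ c).ne'
      have hsym : (v c - vstar p) ⬝ᵥ (M c p).mulVec (v c - vstar p)
          = (vstar p - v c) ⬝ᵥ (M c p).mulVec (vstar p - v c) := by
        rw [show v c - vstar p = -(vstar p - v c) from (neg_sub _ _).symm,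
          Matrix.mulVec_neg, neg_dotProduct, dotProduct_neg, neg_neg]
      rw [hsym]
      field_simp
      simp only [Matrix.mulVec_sub, dotProduct_sub, sub_dotProduct,
        dotProduct_smul, smul_eq_mul, dotProduct_comm (L c p)]
      ring
    rw [e1, Finset.mul_sum, Finset.mul_sum, dot_sum',
      ← Finset.sum_add_distrib, ← Finset.sum_add_distrib,
      Finset.sum_congr rfl e2, Finset.sum_add_distrib]
    have hz : ∑ p ∈ Pc c, pc c * (v c ⬝ᵥ L c p) = 0 := by
      rw [← Finset.mul_sum, ← dot_sum', hgauss c]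
      simp
    rw [hz, add_zero]
  -- Sum over cells, exchange the order of summation, use nodal equilibrium
  calc ∑ c, m c * E' c
      = ∑ c, ∑ p ∈ Pc c, vstar p ⬝ᵥ ((M c p).mulVec (vstar p - v c) - pc c • L c p) := by
        exact Finset.sum_congr rfl (fun c _ => key c)
    _ = ∑ p, ∑ c ∈ Cp p, vstar p ⬝ᵥ ((M c p).mulVec (vstar p - v c) - pc c • L c p) :=
        Finset.sum_comm' (fun c p => by simp [hinc])
    _ = 0 := by
        refine Finset.sum_eq_zero (fun p _ => ?_)
        rw [← dot_sum']
        have h : ∑ c ∈ Cp p, ((M c p).mulVec (vstar p - v c) - pc c • L c p) = 0 := by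
          have := hnode p
          rw [← neg_eq_zero, ← Finset.sum_neg_distrib] at this
          simpa using this
        rw [h, dotProduct_zero]
end
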